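/- Let (A, B, ψ, J, 𝕂) be a reflection bialgebra and let g ∈ A be invertible. Then (A, B, ψ_g, J_g, 𝕂_g) with ψ_g = Ad(g)∘ψ, J_g = (g⊗g)·J·Δ(g)^{-1}, and 𝕂_g = (1⊗g)·𝕂 is again a reflection bialgebra; moreover (ε⊗id)(𝕂_g) = g·(ε⊗id)(𝕂), so the induced basic K-matrix transforms as K ↦ g·K. In particular, the support condition 𝕂_g ∈ B ⊗ A holds automatically. -/

import Mathlib

open TensorProduct

section Defs
variable (k A : Type*) [CommSemiring k] [Semiring A]

section Alg
variable [Algebra k A]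

noncomputable def emb12 : A ⊗[k] A →ₐ[k] A ⊗[k] (A ⊗[k] A) :=
  Algebra.TensorProduct.map (AlgHom.id k A) Algebra.TensorProduct.includeLeft

noncomputable def emb13 : A ⊗[k] A →ₐ[k] A ⊗[k] (A ⊗[k] A) :=
  Algebra.TensorProduct.map (AlgHom.id k A) Algebra.TensorProduct.includeRight

noncomputable def emb23 : A ⊗[k] A →ₐ[k] A ⊗[k] (A ⊗[k] A) :=
  Algebra.TensorProduct.includeRight

noncomputable def flip2 : A ⊗[k] A ≃ₐ[k] A ⊗[k] A := Algebra.TensorProduct.comm k A A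

noncomputable def psiL (ψ : A ≃ₐ[k] A) : A ⊗[k] A →ₐ[k] A ⊗[k] A :=
  Algebra.TensorProduct.map ψ.toAlgHom (AlgHom.id k A)

noncomputable def psiR (ψ : A ≃ₐ[k] A) : A ⊗[k] A →ₐ[k] A ⊗[k] A :=
  Algebra.TensorProduct.map (AlgHom.id k A) ψ.toAlgHom

noncomputable def psiBoth (ψ : A ≃ₐ[k] A) : A ⊗[k] A →ₐ[k] A ⊗[k] A :=
  Algebra.TensorProduct.map ψ.toAlgHom ψ.toAlgHom

noncomputable def sub2 (B : Subalgebra k A) : Submodule k (A ⊗[k] A) :=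
  Submodule.span k {t : A ⊗[k] A | ∃ x ∈ B, ∃ y : A, t = x ⊗ₜ[k] y}

end Alg

variable [Bialgebra k A]

noncomputable def cop : A →ₐ[k] A ⊗[k] A := Bialgebra.comulAlgHom k A

noncomputable def copOp : A →ₐ[k] A ⊗[k] A := (flip2 k A).toAlgHom.comp (cop k A)

noncomputable def cou : A →ₐ[k] k := Bialgebra.counitAlgHom k A

noncomputable def copL : A ⊗[k] A →ₐ[k] A ⊗[k] (A ⊗[k] A) :=
  (Algebra.TensorProduct.assoc k k k A A A).toAlgHom.comp
    (Algebra.TensorProduct.map (cop k A) (AlgHom.id k A))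

noncomputable def copR : A ⊗[k] A →ₐ[k] A ⊗[k] (A ⊗[k] A) :=
  Algebra.TensorProduct.map (AlgHom.id k A) (cop k A)

noncomputable def couL : A ⊗[k] A →ₐ[k] A :=
  (Algebra.TensorProduct.lid k A).toAlgHom.comp
    (Algebra.TensorProduct.map (cou k A) (AlgHom.id k A))

noncomputable def couR : A ⊗[k] A →ₐ[k] A :=
  (Algebra.TensorProduct.rid k k A).toAlgHom.comp
    (Algebra.TensorProduct.map (AlgHom.id k A) (cou k A))

structure QTriangular (R : A ⊗[k] A) : Prop where
  isUnit : IsUnit R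
  intertwine : ∀ x : A, R * cop k A x = copOp k A x * R
  coproduct_left : copL k A R = emb13 k A R * emb23 k A R
  coproduct_right : copR k A R = emb13 k A R * emb12 k A R

end Defs

section QSP
variable (k A : Type*) [CommSemiring k] [Semiring A] [Bialgebra k A]

/-- A twist pair `(ψ, J)`: `J` is a Drinfeld twist and `A^{cop,ψ} = A_J` as
quasitriangular bialgebras. -/
structure TwistPair (R : A ⊗[k] A) (ψ : A ≃ₐ[k] A) (J Jinv : A ⊗[k] A) : Prop where
  mul_inv : J * Jinv = 1
  inv_mul : Jinv * J = 1
  cocycle : emb12 k A J * copL k A J = emb23 k A J * copR k A J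
  counit_left : couL k A J = 1
  counit_right : couR k A J = 1
  compat_coproduct : ∀ x : A, psiBoth k A ψ (copOp k A (ψ.symm x)) = J * cop k A x * Jinv
  compat_R : psiBoth k A ψ (flip2 k A R) = flip2 k A J * R * Jinv

/-- A cylindrical bialgebra `(A, B, ψ, J, K)`. -/
structure Cylindrical (R : A ⊗[k] A) (B : Subalgebra k A) (ψ : A ≃ₐ[k] A)
    (J Jinv : A ⊗[k] A) (K : A) : Prop where
  qt : QTriangular k A R
  coideal : ∀ b ∈ B, cop k A b ∈ sub2 k A B
  twist : TwistPair k A R ψ J Jinv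
  isUnitK : IsUnit K
  intertwine : ∀ b ∈ B, K * b = ψ b * K
  coproduct : cop k A K = Jinv * ((1 : A) ⊗ₜ[k] K) * psiL k A ψ R * (K ⊗ₜ[k] (1 : A))

/-- A reflection bialgebra `(A, B, ψ, J, 𝕂)`, the universal tensor K-matrix `𝕂` being
an element of `B ⊗ A ⊆ A ⊗ A`. -/
structure Reflection (R : A ⊗[k] A) (B : Subalgebra k A) (ψ : A ≃ₐ[k] A)
    (J Jinv : A ⊗[k] A) (TK : A ⊗[k] A) : Prop where
  qt : QTriangular k A R
  coideal : ∀ b ∈ B, cop k A b ∈ sub2 k A B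
  twist : TwistPair k A R ψ J Jinv
  support : TK ∈ sub2 k A B
  isUnitTK : IsUnit TK
  intertwine : ∀ b ∈ B, TK * cop k A b = psiR k A ψ (cop k A b) * TK
  coproduct_left : copL k A TK =
    emb23 k A (flip2 k A (psiL k A ψ R)) * emb13 k A TK * emb23 k A R
  coproduct_right : copR k A TK =
    emb23 k A Jinv * emb13 k A TK * emb23 k A (psiL k A ψ R) * emb12 k A TK

end QSP

section Gauge
variable (k A : Type*) [CommSemiring k] [Semiring A] [Bialgebra k A]

/-- the gauged twist automorphism `ψ_g = Ad(g) ∘ ψ` -/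
noncomputable def gaugePsi (ψ : A ≃ₐ[k] A) (g gInv : A) : A → A :=
  fun x => g * ψ x * gInv

/-- the inverse `ψ_g⁻¹ = ψ⁻¹ ∘ Ad(g)⁻¹` of the gauged twist automorphism -/
noncomputable def gaugePsiInv (ψ : A ≃ₐ[k] A) (g gInv : A) : A → A :=
  fun x => ψ.symm (gInv * x * g)

/-- `ψ_g ⊗ ψ_g = Ad(g ⊗ g) ∘ (ψ ⊗ ψ)` on `A ⊗ A` -/
noncomputable def gaugePsi2 (ψ : A ≃ₐ[k] A) (g gInv : A) : A ⊗[k] A → A ⊗[k] A :=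
  fun u => (g ⊗ₜ[k] g) * psiBoth k A ψ u * (gInv ⊗ₜ[k] gInv)

/-- `id ⊗ ψ_g = Ad(1 ⊗ g) ∘ (id ⊗ ψ)` on `A ⊗ A` -/
noncomputable def gaugePsiRight (ψ : A ≃ₐ[k] A) (g gInv : A) : A ⊗[k] A → A ⊗[k] A :=
  fun u => ((1 : A) ⊗ₜ[k] g) * psiR k A ψ u * ((1 : A) ⊗ₜ[k] gInv)

/-- the gauged Drinfeld twist `J_g = (g ⊗ g) · J · Δ(g)⁻¹` -/
noncomputable def gaugeJ (J : A ⊗[k] A) (g gInv : A) : A ⊗[k] A :=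
  (g ⊗ₜ[k] g) * J * cop k A gInv

/-- the inverse `J_g⁻¹ = Δ(g) · J⁻¹ · (g⁻¹ ⊗ g⁻¹)` of the gauged Drinfeld twist -/
noncomputable def gaugeJinv (Jinv : A ⊗[k] A) (g gInv : A) : A ⊗[k] A :=
  cop k A g * Jinv * (gInv ⊗ₜ[k] gInv)

/-- `R^{ψ_g} = (ψ_g ⊗ id)(R) = (g ⊗ 1) · R^ψ · (g⁻¹ ⊗ 1)` -/
noncomputable def gaugeRpsi (R : A ⊗[k] A) (ψ : A ≃ₐ[k] A) (g gInv : A) : A ⊗[k] A :=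
  (g ⊗ₜ[k] (1 : A)) * psiL k A ψ R * (gInv ⊗ₜ[k] (1 : A))

end Gauge

/-!
Gauging by `g` conjugates every structure map by a tensor power of `g`, so each axiom for
`(ψ_g, J_g, 𝕂_g)` is the corresponding axiom for `(ψ, J, 𝕂)` conjugated: the new factors
`g ⊗ g`, `Δ(g)^{±1}`, `1 ⊗ g` either cancel against their inverses or commute past the
tensor legs on which they act trivially. The only non-formal inputs are coassociativity,
for the twist cocycle, and `R Δ(x) = Δ^op(x) R`, which absorbs `Δ(g)^{±1}` around `R`.
-/

open Algebra.TensorProduct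

lemma mul_mul_cancel_left_of_mul_eq_one {M : Type*} [Monoid M] {a b : M} (h : a * b = 1)
    (c : M) : a * (b * c) = c := by
  rw [← mul_assoc, h, one_mul]

section Legs
variable {k A : Type*} [CommSemiring k] [Semiring A] [Algebra k A]

@[simp] lemma emb23_apply (u : A ⊗[k] A) : emb23 k A u = 1 ⊗ₜ u := rfl

@[simp] lemma emb12_tmul (a b : A) : emb12 k A (a ⊗ₜ b) = a ⊗ₜ (b ⊗ₜ 1) := rfl

@[simp] lemma emb13_tmul (a b : A) : emb13 k A (a ⊗ₜ b) = a ⊗ₜ (1 ⊗ₜ b) := rfl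

lemma commute_emb12_one_tmul_one_tmul (u : A ⊗[k] A) (c : A) :
    Commute (emb12 k A u) (1 ⊗ₜ (1 ⊗ₜ c)) := by
  induction u using TensorProduct.induction_on with
  | zero => simp
  | tmul a b => simp [Commute, SemiconjBy, tmul_mul_tmul]
  | add x y hx hy => rw [map_add]; exact hx.add_left hy

lemma commute_emb13_one_tmul_tmul_one (u : A ⊗[k] A) (c : A) :
    Commute (emb13 k A u) (1 ⊗ₜ (c ⊗ₜ 1)) := by
  induction u using TensorProduct.induction_on with
  | zero => simp
  | tmul a b => simp [Commute, SemiconjBy, tmul_mul_tmul]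
  | add x y hx hy => rw [map_add]; exact hx.add_left hy

lemma commute_emb23_tmul_one (u : A ⊗[k] A) (c : A) :
    Commute (emb23 k A u) (c ⊗ₜ 1) := by
  simp [Commute, SemiconjBy, tmul_mul_tmul]

lemma isUnit_one_tmul_mul {g gInv : A} {TK : A ⊗[k] A} (hTK : IsUnit TK) (hg : g * gInv = 1)
    (hg' : gInv * g = 1) : IsUnit (((1 : A) ⊗ₜ[k] g) * TK) :=
  ((⟨g, gInv, hg, hg'⟩ : Aˣ).isUnit.map (includeRight : A →ₐ[k] A ⊗[k] A)).mul hTK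

lemma one_tmul_mul_mem_sub2 {B : Subalgebra k A} (a : A) {t : A ⊗[k] A}
    (ht : t ∈ sub2 k A B) : (1 ⊗ₜ a) * t ∈ sub2 k A B := by
  have : sub2 k A B ≤ (sub2 k A B).comap (LinearMap.mulLeft k ((1 : A) ⊗ₜ[k] a)) := by
    refine Submodule.span_le.2 ?_
    rintro _ ⟨x, hx, y, rfl⟩
    exact Submodule.subset_span ⟨x, hx, a * y, by simp [tmul_mul_tmul]⟩
  exact this ht

end Legs

section Coproduct
variable {k A : Type*} [CommSemiring k] [Semiring A] [Bialgebra k A]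

lemma copL_tmul (a b : A) : copL k A (a ⊗ₜ b) = emb12 k A (cop k A a) * (1 ⊗ₜ (1 ⊗ₜ b)) := by
  change Algebra.TensorProduct.assoc k k k A A A (cop k A a ⊗ₜ b) = _
  induction cop k A a using TensorProduct.induction_on with
  | zero => simp
  | tmul x y => simp [tmul_mul_tmul]
  | add u v hu hv => simp [add_tmul, add_mul, hu, hv]

lemma copR_tmul (a b : A) : copR k A (a ⊗ₜ b) = (a ⊗ₜ 1) * emb23 k A (cop k A b) := by
  simp [copR, tmul_mul_tmul]

lemma copL_cop (x : A) : copL k A (cop k A x) = copR k A (cop k A x) :=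
  Coalgebra.coassoc_apply x

lemma couL_one_tmul (a : A) : couL k A (1 ⊗ₜ a) = a := by
  simp [couL]

end Coproduct

section GaugeTwist
variable {k A : Type*} [CommSemiring k] [Semiring A] [Bialgebra k A] {g gInv : A}

lemma gaugeJ_mul_gaugeJinv {J Jinv : A ⊗[k] A} (hJ : J * Jinv = 1) (hg : g * gInv = 1)
    (hg' : gInv * g = 1) : gaugeJ k A J g gInv * gaugeJinv k A Jinv g gInv = 1 := by
  have hΔ : cop k A gInv * cop k A g = 1 := by rw [← map_mul, hg', map_one]
  have hgg : (g ⊗ₜ[k] g) * (gInv ⊗ₜ gInv) = 1 := by rw [tmul_mul_tmul, hg, one_def]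
  simp only [gaugeJ, gaugeJinv, mul_assoc]
  rw [mul_mul_cancel_left_of_mul_eq_one hΔ, mul_mul_cancel_left_of_mul_eq_one hJ, hgg]

lemma gaugeJinv_mul_gaugeJ {J Jinv : A ⊗[k] A} (hJ : Jinv * J = 1) (hg : g * gInv = 1)
    (hg' : gInv * g = 1) : gaugeJinv k A Jinv g gInv * gaugeJ k A J g gInv = 1 := by
  have hΔ : cop k A g * cop k A gInv = 1 := by rw [← map_mul, hg, map_one]
  have hgg : (gInv ⊗ₜ[k] gInv) * (g ⊗ₜ g) = 1 := by rw [tmul_mul_tmul, hg', one_def]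
  simp only [gaugeJ, gaugeJinv, mul_assoc]
  rw [mul_mul_cancel_left_of_mul_eq_one hgg, mul_mul_cancel_left_of_mul_eq_one hJ, hΔ]

lemma emb12_gaugeJ_mul_copL_gaugeJ (J : A ⊗[k] A) (hg' : gInv * g = 1) :
    emb12 k A (gaugeJ k A J g gInv) * copL k A (gaugeJ k A J g gInv) =
      (g ⊗ₜ (g ⊗ₜ g)) * (emb12 k A J * copL k A J) * copL k A (cop k A gInv) := by
  have hΔ : emb12 k A (cop k A gInv) * emb12 k A (cop k A g) = 1 := by
    rw [← map_mul, ← map_mul, hg', map_one, map_one]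
  simp only [gaugeJ, map_mul, copL_tmul, mul_assoc]
  rw [mul_mul_cancel_left_of_mul_eq_one hΔ, (commute_emb12_one_tmul_one_tmul J g).left_comm,
    ← mul_assoc (emb12 k A _)]
  simp [tmul_mul_tmul]

lemma emb23_gaugeJ_mul_copR_gaugeJ (J : A ⊗[k] A) (hg' : gInv * g = 1) :
    emb23 k A (gaugeJ k A J g gInv) * copR k A (gaugeJ k A J g gInv) =
      (g ⊗ₜ (g ⊗ₜ g)) * (emb23 k A J * copR k A J) * copR k A (cop k A gInv) := by
  have hΔ : emb23 k A (cop k A gInv) * emb23 k A (cop k A g) = 1 := by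
    rw [← map_mul, ← map_mul, hg', map_one, map_one]
  simp only [gaugeJ, map_mul, copR_tmul, mul_assoc]
  rw [(commute_emb23_tmul_one (cop k A gInv) g).left_comm, mul_mul_cancel_left_of_mul_eq_one hΔ,
    (commute_emb23_tmul_one J g).left_comm, (commute_emb23_tmul_one (g ⊗ₜ g) g).left_comm,
    ← mul_assoc (g ⊗ₜ 1)]
  simp [tmul_mul_tmul]

lemma gaugeJ_cocycle {J : A ⊗[k] A}
    (hJ : emb12 k A J * copL k A J = emb23 k A J * copR k A J) (hg' : gInv * g = 1) :
    emb12 k A (gaugeJ k A J g gInv) * copL k A (gaugeJ k A J g gInv) =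
      emb23 k A (gaugeJ k A J g gInv) * copR k A (gaugeJ k A J g gInv) := by
  rw [emb12_gaugeJ_mul_copL_gaugeJ J hg', emb23_gaugeJ_mul_copR_gaugeJ J hg', hJ, copL_cop]

lemma gaugePsi2_copOp_gaugePsiInv {ψ : A ≃ₐ[k] A} {J Jinv : A ⊗[k] A}
    (hψ : ∀ x, psiBoth k A ψ (copOp k A (ψ.symm x)) = J * cop k A x * Jinv) (x : A) :
    gaugePsi2 k A ψ g gInv (copOp k A (gaugePsiInv k A ψ g gInv x)) =
      gaugeJ k A J g gInv * cop k A x * gaugeJinv k A Jinv g gInv := by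
  simp only [gaugePsi2, gaugePsiInv, gaugeJ, gaugeJinv]
  rw [hψ, map_mul, map_mul]
  simp only [mul_assoc]

lemma gaugePsi2_flip2 {R : A ⊗[k] A} {ψ : A ≃ₐ[k] A} {J Jinv : A ⊗[k] A}
    (hR : ∀ x, R * cop k A x = copOp k A x * R)
    (hψR : psiBoth k A ψ (flip2 k A R) = flip2 k A J * R * Jinv) (hg' : gInv * g = 1) :
    gaugePsi2 k A ψ g gInv (flip2 k A R) =
      flip2 k A (gaugeJ k A J g gInv) * R * gaugeJinv k A Jinv g gInv := by
  have hΔ : copOp k A gInv * copOp k A g = 1 := by rw [← map_mul, hg', map_one]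
  have hRΔ (u : A ⊗[k] A) : copOp k A gInv * (R * (cop k A g * u)) = R * u := by
    rw [← mul_assoc R, hR, mul_assoc (copOp k A g), mul_mul_cancel_left_of_mul_eq_one hΔ]
  have hflip : flip2 k A (g ⊗ₜ g) = g ⊗ₜ g := comm_tmul k A A g g
  have hflipΔ : flip2 k A (cop k A gInv) = copOp k A gInv := rfl
  simp only [gaugePsi2, gaugeJ, gaugeJinv, hψR, map_mul, hflip, hflipΔ, mul_assoc, hRΔ]

end GaugeTwist

section GaugeK
variable {k A : Type*} [CommSemiring k] [Semiring A] [Bialgebra k A] {g gInv : A}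

lemma one_tmul_mul_mul_eq_gaugePsiRight_mul {ψ : A ≃ₐ[k] A} {TK u : A ⊗[k] A}
    (hK : TK * u = psiR k A ψ u * TK) (hg' : gInv * g = 1) :
    ((1 : A) ⊗ₜ[k] g) * TK * u = gaugePsiRight k A ψ g gInv u * (((1 : A) ⊗ₜ[k] g) * TK) := by
  have h1g : ((1 : A) ⊗ₜ[k] gInv) * (1 ⊗ₜ g) = 1 := by rw [tmul_mul_tmul, one_mul, hg', one_def]
  rw [mul_assoc, hK]
  simp only [gaugePsiRight, mul_assoc, mul_mul_cancel_left_of_mul_eq_one h1g]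

lemma copL_one_tmul_mul {R TK : A ⊗[k] A} {ψ : A ≃ₐ[k] A}
    (hK : copL k A TK = emb23 k A (flip2 k A (psiL k A ψ R)) * emb13 k A TK * emb23 k A R)
    (hg' : gInv * g = 1) :
    copL k A (((1 : A) ⊗ₜ[k] g) * TK) =
      emb23 k A (flip2 k A (gaugeRpsi k A R ψ g gInv)) *
        emb13 k A (((1 : A) ⊗ₜ[k] g) * TK) * emb23 k A R := by
  have h11g : ((1 : A) ⊗ₜ[k] ((1 : A) ⊗ₜ[k] gInv)) * (1 ⊗ₜ (1 ⊗ₜ g)) = 1 := by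
    simp [tmul_mul_tmul, hg', one_def]
  simp only [gaugeRpsi, map_mul, copL_tmul, hK, emb13_tmul, map_one, one_mul, mul_assoc,
    flip2, Algebra.TensorProduct.comm_tmul, emb23_apply, mul_mul_cancel_left_of_mul_eq_one h11g]

lemma copR_one_tmul_mul {R Jinv TK : A ⊗[k] A} {ψ : A ≃ₐ[k] A}
    (hK : copR k A TK =
      emb23 k A Jinv * emb13 k A TK * emb23 k A (psiL k A ψ R) * emb12 k A TK)
    (hg' : gInv * g = 1) :
    copR k A (((1 : A) ⊗ₜ[k] g) * TK) =
      emb23 k A (gaugeJinv k A Jinv g gInv) * emb13 k A (((1 : A) ⊗ₜ[k] g) * TK) *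
        emb23 k A (gaugeRpsi k A R ψ g gInv) * emb12 k A (((1 : A) ⊗ₜ[k] g) * TK) := by
  have h1g1 : ((1 : A) ⊗ₜ[k] (gInv ⊗ₜ[k] (1 : A))) * (1 ⊗ₜ (g ⊗ₜ 1)) = 1 := by
    simp [tmul_mul_tmul, hg', one_def]
  have hsplit : ((1 : A) ⊗ₜ[k] (gInv ⊗ₜ[k] gInv)) * (1 ⊗ₜ (1 ⊗ₜ g)) = 1 ⊗ₜ (gInv ⊗ₜ 1) := by
    simp [tmul_mul_tmul, hg']
  simp only [gaugeJinv, gaugeRpsi, map_mul, copR_tmul, hK, emb12_tmul, emb13_tmul, emb23_apply,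
    mul_assoc]
  rw [← mul_assoc ((1 : A) ⊗ₜ[k] (gInv ⊗ₜ[k] gInv)), hsplit,
    (commute_emb13_one_tmul_tmul_one TK gInv).symm.left_comm,
    mul_mul_cancel_left_of_mul_eq_one h1g1, mul_mul_cancel_left_of_mul_eq_one h1g1, ← one_def,
    one_mul]

lemma couL_one_tmul_mul (TK : A ⊗[k] A) (g : A) :
    couL k A (((1 : A) ⊗ₜ[k] g) * TK) = g * couL k A TK := by
  rw [map_mul, couL_one_tmul]

end GaugeK

/-- Gauge transformation of a reflection bialgebra: if
`(A, B, ψ, J, 𝕂)` is a reflection bialgebra and `g ∈ A` is invertible, then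
`(A, B, ψ_g, J_g, 𝕂_g)` with `ψ_g = Ad(g)∘ψ`, `J_g = (g⊗g)·J·Δ(g)⁻¹` and
`𝕂_g = (1⊗g)·𝕂` is again a reflection bialgebra; moreover
`(ε⊗id)(𝕂_g) = g·(ε⊗id)(𝕂)`, and the support condition `𝕂_g ∈ B ⊗ A` holds. -/
theorem reflection_gauge_transformation
    {k A : Type*} [Field k] [Ring A] [Bialgebra k A]
    (R : A ⊗[k] A) (B : Subalgebra k A) (ψ : A ≃ₐ[k] A) (J Jinv TK : A ⊗[k] A)
    (hrefl : Reflection k A R B ψ J Jinv TK)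
    (g gInv : A) (hg : g * gInv = 1) (hg' : gInv * g = 1) :
    -- (ψ_g, J_g) is a twist pair
    (gaugeJ k A J g gInv * gaugeJinv k A Jinv g gInv = 1) ∧
    (gaugeJinv k A Jinv g gInv * gaugeJ k A J g gInv = 1) ∧
    (emb12 k A (gaugeJ k A J g gInv) * copL k A (gaugeJ k A J g gInv) =
      emb23 k A (gaugeJ k A J g gInv) * copR k A (gaugeJ k A J g gInv)) ∧
    (∀ x : A, gaugePsi2 k A ψ g gInv (copOp k A (gaugePsiInv k A ψ g gInv x)) =
      gaugeJ k A J g gInv * cop k A x * gaugeJinv k A Jinv g gInv) ∧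
    (gaugePsi2 k A ψ g gInv (flip2 k A R) =
      flip2 k A (gaugeJ k A J g gInv) * R * gaugeJinv k A Jinv g gInv) ∧
    -- 𝕂_g is an invertible universal tensor K-matrix for (ψ_g, J_g),
    -- supported on B ⊗ A
    (((1 : A) ⊗ₜ[k] g) * TK ∈ sub2 k A B) ∧
    (IsUnit (((1 : A) ⊗ₜ[k] g) * TK)) ∧
    (∀ b ∈ B, (((1 : A) ⊗ₜ[k] g) * TK) * cop k A b =
      gaugePsiRight k A ψ g gInv (cop k A b) * (((1 : A) ⊗ₜ[k] g) * TK)) ∧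
    (copL k A (((1 : A) ⊗ₜ[k] g) * TK) =
      emb23 k A (flip2 k A (gaugeRpsi k A R ψ g gInv)) *
        emb13 k A (((1 : A) ⊗ₜ[k] g) * TK) * emb23 k A R) ∧
    (copR k A (((1 : A) ⊗ₜ[k] g) * TK) =
      emb23 k A (gaugeJinv k A Jinv g gInv) * emb13 k A (((1 : A) ⊗ₜ[k] g) * TK) *
        emb23 k A (gaugeRpsi k A R ψ g gInv) * emb12 k A (((1 : A) ⊗ₜ[k] g) * TK)) ∧
    -- the induced basic K-matrix transforms as K ↦ g·K
    (couL k A (((1 : A) ⊗ₜ[k] g) * TK) = g * couL k A TK) := by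
  obtain ⟨hR, -, hJ, hsupport, hunit, hintertwine, hcopL, hcopR⟩ := hrefl
  exact ⟨gaugeJ_mul_gaugeJinv hJ.mul_inv hg hg', gaugeJinv_mul_gaugeJ hJ.inv_mul hg hg',
    gaugeJ_cocycle hJ.cocycle hg', gaugePsi2_copOp_gaugePsiInv hJ.compat_coproduct,
    gaugePsi2_flip2 hR.intertwine hJ.compat_R hg', one_tmul_mul_mem_sub2 g hsupport,
    isUnit_one_tmul_mul hunit hg hg',
    fun b hb => one_tmul_mul_mul_eq_gaugePsiRight_mul (hintertwine b hb) hg',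
    copL_one_tmul_mul hcopL hg', copR_one_tmul_mul hcopR hg', couL_one_tmul_mul TK g⟩
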